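/- Let n ≥ k ≥ 2 and let M ∈ ℂ^{n×k} satisfy M(1,j) = 0 for j = 2,…,k. Let J ∈ ℂ^{n×n} be the downshift matrix and set S = J^k − M·[0_{k×(n−k)} | I_k] (so the last k columns of J^k are modified by subtracting the columns of M). Define S_1 = J − (M e_1) e_n^T and S̃ = J^{k−1} − M̃·[0_{(k−1)×(n−k+1)} | I_{k−1}], where M̃ ∈ ℂ^{n×(k−1)} is given by M̃(i,j) = M(i+1, j+1) for 1 ≤ i ≤ n−1 and M̃(n,j) = 0. Then S = S_1 S̃. -/

import Mathlib

open Matrix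

noncomputable section

/-- The `n × n` downshift matrix `J`: ones on the subdiagonal, zeros elsewhere. -/
def downshift (n : ℕ) : Matrix (Fin n) (Fin n) ℂ :=
  fun p q => if (p : ℕ) = (q : ℕ) + 1 then 1 else 0

/-- The `k × n` matrix `[0_{k×(n−k)} | I_k]`: last `k` columns form the identity,
first `n − k` columns are zero. -/
def lastColsSel (n k : ℕ) : Matrix (Fin k) (Fin n) ℂ :=
  fun i q => if (q : ℕ) = n - k + (i : ℕ) then 1 else 0

/-! `S₁ S̃ = J S̃ − (M e₁)(eₙᵀ S̃)`, and each term matches a piece of `S`. First `J·J^{k−1} = J^k`.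
Next, `M̃` is `M` without its first column and moved up one row, so `J M̃` moves it back down and
recovers the last `k − 1` columns of `M`: the row lost at the top is zero by hypothesis. Finally the
last row of `M̃` is zero, so `eₙᵀ S̃` is the last row of `J^{k−1}`, namely `e_{n−k+1}ᵀ` (index
`⟨n - k⟩` in `Fin n`), and `(M e₁) e_{n−k+1}ᵀ` is the first-column part of `M·[0 | I_k]`. -/

def shiftUp {ι R : Type*} [Zero R] {n : ℕ} (A : Matrix (Fin n) ι R) : Matrix (Fin n) ι R :=
  of fun i j => if h : (i : ℕ) + 1 < n then A ⟨i + 1, h⟩ j else 0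

def dropFirstCol {m R : Type*} {k : ℕ} (A : Matrix m (Fin k) R) : Matrix m (Fin (k - 1)) R :=
  of fun i j => A i ⟨j + 1, by omega⟩

theorem downshift_mul_apply {ι : Type*} {n : ℕ} (A : Matrix (Fin n) ι ℂ) (p : Fin n) (j : ι) :
    (downshift n * A) p j = if h : 0 < (p : ℕ) then A ⟨p - 1, by omega⟩ j else 0 := by
  rw [mul_apply]
  split_ifs with hp
  · rw [Finset.sum_eq_single ⟨p - 1, by omega⟩]
    · rw [downshift, if_pos (by dsimp only; omega), one_mul]
    · intro r _ hr
      simp only [downshift, ite_mul, one_mul, zero_mul, ite_eq_right_iff]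
      intro h
      exact absurd (Fin.ext (by dsimp only; omega)) hr
    · simp
  · refine Finset.sum_eq_zero fun r _ => ?_
    simp only [downshift, ite_mul, one_mul, zero_mul, ite_eq_right_iff]
    omega

theorem downshift_pow_apply (n m : ℕ) (p q : Fin n) :
    (downshift n ^ m) p q = if (p : ℕ) = q + m then 1 else 0 := by
  induction m generalizing p with
  | zero => simp [one_apply, Fin.ext_iff]
  | succ m ih =>
    rw [pow_succ', downshift_mul_apply]
    by_cases hp : 0 < (p : ℕ)
    · rw [dif_pos hp, ih]
      exact if_congr (show (p : ℕ) - 1 = q + m ↔ (p : ℕ) = q + (m + 1) by omega) rfl rfl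
    · rw [dif_neg hp, if_neg (by omega)]

theorem downshift_pow_row_eq_single {n m : ℕ} {i j : Fin n} (h : (i : ℕ) = j + m) :
    (downshift n ^ m) i = Pi.single j 1 := by
  ext q
  rw [downshift_pow_apply, Pi.single_apply]
  congr 1
  simp only [eq_iff_iff, Fin.ext_iff]
  omega

theorem downshift_mul_shiftUp {ι : Type*} {n : ℕ} (A : Matrix (Fin n) ι ℂ)
    (hA : ∀ (i : Fin n) j, (i : ℕ) = 0 → A i j = 0) : downshift n * shiftUp A = A := by
  ext p j
  rw [downshift_mul_apply]
  split_ifs with hp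
  · simp [shiftUp, show (p : ℕ) - 1 + 1 = p by omega]
  · exact (hA p j (by omega)).symm

theorem shiftUp_mul_row_last_eq_zero {ι κ R : Type*} [Fintype ι] [NonUnitalNonAssocSemiring R]
    {n : ℕ} (A : Matrix (Fin n) ι R) (B : Matrix ι κ R) (i : Fin n) (hi : (i : ℕ) + 1 = n) :
    (shiftUp A * B) i = 0 := by
  ext q
  simp [mul_apply, shiftUp, hi]

theorem mul_lastColsSel_apply {m : Type*} {n k : ℕ} (A : Matrix m (Fin k) ℂ) (p : m) (q : Fin n) :
    (A * lastColsSel n k) p q =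
      if h : n - k ≤ q ∧ q - (n - k) < k then A p ⟨q - (n - k), h.2⟩ else 0 := by
  rw [mul_apply]
  split_ifs with h
  · rw [Finset.sum_eq_single ⟨q - (n - k), h.2⟩]
    · rw [lastColsSel, if_pos (by dsimp only; omega), mul_one]
    · intro r _ hr
      simp only [lastColsSel, mul_ite, mul_one, mul_zero, ite_eq_right_iff]
      intro h
      exact absurd (Fin.ext (by dsimp only; omega)) hr
    · simp
  · refine Finset.sum_eq_zero fun r _ => ?_
    simp only [lastColsSel, mul_ite, mul_one, mul_zero, ite_eq_right_iff]
    omega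

theorem mul_lastColsSel_eq_add {m : Type*} {n k : ℕ} (hk : 0 < k) (hkn : k ≤ n)
    (A : Matrix m (Fin k) ℂ) :
    A * lastColsSel n k = vecMulVec (fun i => A i ⟨0, hk⟩) (Pi.single ⟨n - k, by omega⟩ 1) +
      dropFirstCol A * lastColsSel n (k - 1) := by
  ext p q
  simp only [Matrix.add_apply, mul_lastColsSel_apply, vecMulVec_apply, Pi.single_apply,
    dropFirstCol, of_apply, Fin.ext_iff]
  rcases lt_trichotomy (q : ℕ) (n - k) with hq | hq | hq
  · rw [dif_neg (by omega), if_neg (by omega), dif_neg (by omega), mul_zero, add_zero]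
  · rw [dif_pos (by omega), if_pos hq, dif_neg (by omega), mul_one, add_zero]
    exact congrArg (A p) (Fin.ext (by dsimp only; omega))
  · rw [dif_pos (by omega), if_neg (by omega), dif_pos (by omega), mul_zero, zero_add]
    exact congrArg (A p) (Fin.ext (by dsimp only; omega))

/-- One step of the recursive Frobenius factorization: with the first row of `M`
vanishing beyond its first entry, `S = J^k − M·[0 | I_k]` factors as
`S₁·S̃` where `S₁ = J − (M e₁) eₙᵀ` and `S̃ = J^(k−1) − M̃·[0 | I_{k−1}]`,
`M̃` consisting of the last `k − 1` columns of `M` moved up one row. -/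
theorem frobenius_factorization_step (n k : ℕ) (hk : 2 ≤ k) (hkn : k ≤ n)
    (M : Matrix (Fin n) (Fin k) ℂ)
    (hM : ∀ j : Fin k, 0 < (j : ℕ) → M ⟨0, by omega⟩ j = 0) :
    (downshift n) ^ k - M * lastColsSel n k =
      (downshift n -
          vecMulVec (fun i => M i ⟨0, by omega⟩) (Pi.single (⟨n - 1, by omega⟩ : Fin n) 1)) *
      ((downshift n) ^ (k - 1) -
        (Matrix.of (fun (i : Fin n) (j : Fin (k - 1)) =>
            if h : (i : ℕ) + 1 < n then
              M ⟨(i : ℕ) + 1, h⟩ ⟨(j : ℕ) + 1, by have := j.isLt; omega⟩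
            else 0)) *
        lastColsSel n (k - 1)) := by
  have hMtilde : (Matrix.of (fun (i : Fin n) (j : Fin (k - 1)) =>
            if h : (i : ℕ) + 1 < n then
              M ⟨(i : ℕ) + 1, h⟩ ⟨(j : ℕ) + 1, by have := j.isLt; omega⟩
            else 0)) = shiftUp (dropFirstCol M) := rfl
  rw [hMtilde]
  have hpow : downshift n * downshift n ^ (k - 1) = downshift n ^ k := by
    rw [← pow_succ', Nat.sub_add_cancel (by omega)]
  have hrow : (downshift n ^ (k - 1) - shiftUp (dropFirstCol M) * lastColsSel n (k - 1)).row
      ⟨n - 1, by omega⟩ = Pi.single ⟨n - k, by omega⟩ 1 := by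
    ext q
    rw [row, Matrix.sub_apply,
      downshift_pow_row_eq_single (j := ⟨n - k, by omega⟩) (by dsimp only; omega),
      shiftUp_mul_row_last_eq_zero _ _ _ (by dsimp only; omega), Pi.zero_apply, sub_zero]
  have hJ : downshift n * shiftUp (dropFirstCol M) = dropFirstCol M :=
    downshift_mul_shiftUp _ fun i j hi => by
      rw [show i = ⟨0, by omega⟩ from Fin.ext hi]
      exact hM ⟨j + 1, by omega⟩ (by simp)
  rw [sub_mul, mul_sub, hpow, ← Matrix.mul_assoc, hJ, vecMulVec_mul, single_one_vecMul, hrow,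
    mul_lastColsSel_eq_add (by omega) hkn]
  abel

end
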